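/- Let Ū be C³ near x_i with |Ū''| ≤ α and suppose there is an extremum ξ₀ of Ū with Ū'(ξ₀) = 0 and |x_i − ξ₀| ≤ Δx. Define δ₊ = Ū(x_i + Δx) − Ū(x_i) and δ₋ = Ū(x_i) − Ū(x_i − Δx). Then δ₊² + δ₋² ≤ (5/2)·α²·Δx⁴ + C·Δx⁵ for some constant C depending only on bounds of Ū and its derivatives up to third order. -/

import Mathlib

/-!
Write `a = Ū'(xᵢ) Δx` and `b = Ū''(xᵢ) Δx² / 2`, so that by Taylor's theorem
`δ₊ = a + b + O(Δx³)` and `δ₋ = a - b + O(Δx³)`. The mean value theorem between `ξ₀` and `xᵢ`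
gives `|Ū'(xᵢ)| ≤ α Δx`, hence `|a| ≤ α Δx²` and `|b| ≤ α Δx² / 2`. First-order Taylor with
the bound `α` shows that `δ₊, δ₋, a, b` are all `O(Δx²)`, so squaring costs only `O(Δx⁵)`,
and `(a + b)² + (a - b)² = 2a² + 2b² ≤ (5/2) α² Δx⁴`.
-/

open Set

lemma abs_sub_le_of_hasDerivAt {f f' : ℝ → ℝ} {x y M : ℝ} (hf : ∀ s, HasDerivAt f (f' s) s)
    (hM : ∀ s ∈ uIcc x y, |f' s| ≤ M) : |f y - f x| ≤ M * |y - x| :=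
  (convex_uIcc x y).norm_image_sub_le_of_norm_hasDerivWithin_le
    (fun s _ => (hf s).hasDerivWithinAt) hM left_mem_uIcc right_mem_uIcc

lemma abs_taylor_one_le {f f' : ℝ → ℝ} {K x : ℝ} (hf : ∀ s, HasDerivAt f (f' s) s)
    (hK : ∀ y, |f' y - f' x| ≤ K * |y - x|) (t : ℝ) :
    |f (x + t) - f x - f' x * t| ≤ K * t ^ 2 := by
  have hg : ∀ s, HasDerivAt (fun s => f (x + s) - f x - f' x * s) (f' (x + s) - f' x) s := by
    intro s
    exact (((hf (x + s)).comp_const_add x s).sub_const (f x)).fun_sub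
      ((hasDerivAt_id' s).const_mul (f' x)) |>.congr_deriv (by ring)
  have hbound : ∀ s ∈ uIcc 0 t, |f' (x + s) - f' x| ≤ K * |t| := by
    intro s hs
    have hst : |s| ≤ |t| := by simpa using abs_sub_left_of_mem_uIcc hs
    have hK0 : 0 ≤ K := by simpa using (abs_nonneg _).trans (hK (x + 1))
    calc |f' (x + s) - f' x| ≤ K * |s| := by simpa using hK (x + s)
      _ ≤ K * |t| := mul_le_mul_of_nonneg_left hst hK0
  calc |f (x + t) - f x - f' x * t| ≤ K * |t| * |t - 0| := by
        simpa using abs_sub_le_of_hasDerivAt hg hbound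
    _ = K * t ^ 2 := by rw [sub_zero, mul_assoc, abs_mul_abs_self, sq]

lemma abs_taylor_two_le {f f' f'' : ℝ → ℝ} {B x : ℝ} (hf : ∀ s, HasDerivAt f (f' s) s)
    (hf' : ∀ s, HasDerivAt f' (f'' s) s) (hB : ∀ y, |f'' y - f'' x| ≤ B * |y - x|) (t : ℝ) :
    |f (x + t) - f x - f' x * t - f'' x * t ^ 2 / 2| ≤ B * |t| ^ 3 := by
  have hg : ∀ s, HasDerivAt (fun s => f (x + s) - f x - f' x * s - f'' x * s ^ 2 / 2)
      (f' (x + s) - f' x - f'' x * s) s := by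
    intro s
    exact ((((hf (x + s)).comp_const_add x s).sub_const (f x)).fun_sub
      ((hasDerivAt_id' s).const_mul (f' x))).fun_sub
      (((hasDerivAt_pow 2 s).const_mul (f'' x)).div_const 2) |>.congr_deriv (by simp; ring)
  have hbound : ∀ s ∈ uIcc 0 t, |f' (x + s) - f' x - f'' x * s| ≤ B * t ^ 2 := by
    intro s hs
    have hst : s ^ 2 ≤ t ^ 2 := sq_le_sq.2 (by simpa using abs_sub_left_of_mem_uIcc hs)
    have hB0 : 0 ≤ B := by simpa using (abs_nonneg _).trans (hB (x + 1))
    exact (abs_taylor_one_le hf' hB s).trans (mul_le_mul_of_nonneg_left hst hB0)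
  calc _ ≤ B * t ^ 2 * |t - 0| := by simpa using abs_sub_le_of_hasDerivAt hg hbound
    _ = B * |t| ^ 3 := by rw [sub_zero, ← sq_abs t]; ring

lemma sq_le_sq_add_of_abs_sub_le {x y r s : ℝ} (hr : |x - y| ≤ r) (hs : |x + y| ≤ s) :
    x ^ 2 ≤ y ^ 2 + r * s := by
  have : x ^ 2 - y ^ 2 ≤ r * s :=
    calc x ^ 2 - y ^ 2 ≤ |(x - y) * (x + y)| := by rw [sq_sub_sq, mul_comm]; exact le_abs_self _
      _ ≤ r * s := by rw [abs_mul]; exact mul_le_mul hr hs (abs_nonneg _) ((abs_nonneg _).trans hr)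
  linarith

lemma sq_add_sq_le_of_abs_sub_le {p m a b r s : ℝ} (hp : |p - (a + b)| ≤ r)
    (hm : |m - (a - b)| ≤ r) (hp' : |p + (a + b)| ≤ s) (hm' : |m + (a - b)| ≤ s) :
    p ^ 2 + m ^ 2 ≤ 2 * a ^ 2 + 2 * b ^ 2 + 2 * (r * s) := by
  linarith [sq_le_sq_add_of_abs_sub_le hp hp', sq_le_sq_add_of_abs_sub_le hm hm']

lemma sq_forward_add_sq_backward_le {f f' f'' : ℝ → ℝ} {α B x h : ℝ}
    (hf : ∀ s, HasDerivAt f (f' s) s) (hf' : ∀ s, HasDerivAt f' (f'' s) s)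
    (hα : ∀ y, |f' y - f' x| ≤ α * |y - x|) (hB : ∀ y, |f'' y - f'' x| ≤ B * |y - x|)
    (hslope : |f' x| ≤ α * h) (hcurv : |f'' x| ≤ α) (hh : 0 < h) :
    (f (x + h) - f x) ^ 2 + (f x - f (x - h)) ^ 2 ≤ 5 / 2 * α ^ 2 * h ^ 4 + 7 * α * B * h ^ 5 := by
  have hp1 := abs_taylor_one_le hf hα h
  have hm1 := abs_taylor_one_le hf hα (-h)
  have hp2 := abs_taylor_two_le hf hf' hB h
  have hm2 := abs_taylor_two_le hf hf' hB (-h)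
  rw [← sub_eq_add_neg, neg_sq, mul_neg] at hm1 hm2
  rw [abs_neg, abs_of_pos hh] at hm2
  rw [abs_of_pos hh] at hp2
  set a := f' x * h
  set b := f'' x * h ^ 2 / 2
  have ha : |a| ≤ α * h ^ 2 := by
    rw [abs_mul, abs_of_pos hh, sq, ← mul_assoc]
    exact mul_le_mul_of_nonneg_right hslope hh.le
  have hb : |b| ≤ α * h ^ 2 / 2 := by
    rw [abs_div, abs_mul, abs_two, abs_of_pos (by positivity : (0:ℝ) < h ^ 2)]
    gcongr
  rw [abs_le] at hp1 hm1 hp2 hm2 ha hb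
  have key := sq_add_sq_le_of_abs_sub_le (r := B * h ^ 3) (s := 7 / 2 * (α * h ^ 2))
    (p := f (x + h) - f x) (m := f x - f (x - h)) (a := a) (b := b)
    (abs_le.2 ⟨by linarith, by linarith⟩) (abs_le.2 ⟨by linarith, by linarith⟩)
    (abs_le.2 ⟨by linarith, by linarith⟩) (abs_le.2 ⟨by linarith, by linarith⟩)
  linarith [sq_le_sq' ha.1 ha.2, sq_le_sq' hb.1 hb.2]

theorem stmt_9 (Ubar : ℝ → ℝ) (hU : ContDiff ℝ 3 Ubar)
    (α B : ℝ)
    (hα : ∀ x : ℝ, |deriv (deriv Ubar) x| ≤ α)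
    (hB : ∀ x : ℝ, |deriv (deriv (deriv Ubar)) x| ≤ B) :
    ∃ C : ℝ, ∀ Δx : ℝ, 0 < Δx → ∀ xi ξ₀ : ℝ,
      deriv Ubar ξ₀ = 0 → |xi - ξ₀| ≤ Δx →
      (Ubar (xi + Δx) - Ubar xi) ^ 2 + (Ubar xi - Ubar (xi - Δx)) ^ 2 ≤
        (5/2) * α ^ 2 * Δx ^ 4 + C * Δx ^ 5 := by
  have hU1 : ∀ s, HasDerivAt Ubar (deriv Ubar s) s :=
    fun s => (hU.differentiable (by norm_num) s).hasDerivAt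
  have hU2 : ∀ s, HasDerivAt (deriv Ubar) (deriv (deriv Ubar) s) s :=
    fun s => ((hU.deriv' (n := 2)).differentiable (by norm_num) s).hasDerivAt
  have hU3 : ∀ s, HasDerivAt (deriv (deriv Ubar)) (deriv (deriv (deriv Ubar)) s) s :=
    fun s => (((hU.deriv' (n := 2)).deriv' (n := 1)).differentiable (by norm_num) s).hasDerivAt
  refine ⟨7 * α * B, fun Δx hΔx xi ξ₀ hξ₀ hclose => ?_⟩
  have hslope : |deriv Ubar xi| ≤ α * Δx := by
    have h := abs_sub_le_of_hasDerivAt (x := ξ₀) (y := xi) hU2 (fun s _ => hα s)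
    rw [hξ₀, sub_zero] at h
    exact h.trans (mul_le_mul_of_nonneg_left hclose ((abs_nonneg _).trans (hα 0)))
  exact sq_forward_add_sq_backward_le hU1 hU2
    (fun y => abs_sub_le_of_hasDerivAt hU2 (fun s _ => hα s))
    (fun y => abs_sub_le_of_hasDerivAt hU3 (fun s _ => hB s)) hslope (hα xi) hΔx
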